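/- Suppose 1/2 < μ ≤ 1 and π ∈ Allow(T_μ). Then π ∈ Allow(T); that is, every pattern realized by the tent map T_μ is also realized by the full tent map T = T_1. -/

import Mathlib

/-!
As long as the orbits of `u` and `v` stay on the same side of `1/2`, the iterate `T_μ^[k]` acts
on them as an affine map of slope `±(2μ)^k`, whose sign depends only on the common itinerary.
For `μ > 1/2` this slope blows up, so distinct points of `[0,1]` are eventually separated by
`1/2`, and the order of two points is then read off from their itineraries up to the separation
time, in the same way for every `μ`. The full tent map realizes every finite itinerary, so a point
`y` whose `T`-itinerary copies the `T_μ`-itinerary of `x` long enough reproduces its pattern.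
-/

open Set

/-- The symmetric tent map of height `μ`:
`T_μ(x) = 2μx` for `x ≤ 1/2` and `T_μ(x) = 2μ(1-x)` for `x > 1/2`. -/
noncomputable def tentMap (μ : ℝ) (x : ℝ) : ℝ :=
  if x ≤ 1/2 then 2*μ*x else 2*μ*(1-x)

/-- `Allows f p` means the permutation `p` of `{0, …, n-1}` is an allowed pattern of the
map `f` on `[0,1]`: there is `x ∈ [0,1]` whose orbit `x, f(x), …, f^[n-1](x)` is in the
same relative order as `p 0, p 1, …, p (n-1)`. -/
def Allows (f : ℝ → ℝ) {n : ℕ} (p : Equiv.Perm (Fin n)) : Prop :=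
  ∃ x ∈ Icc (0:ℝ) 1, ∀ i j : Fin n, p i < p j ↔ f^[(i:ℕ)] x < f^[(j:ℕ)] x

noncomputable def tentSign (μ x : ℝ) (k : ℕ) : ℝ :=
  ∏ m ∈ Finset.range k, if (tentMap μ)^[m] x ≤ 1/2 then 1 else -1

section

variable {μ ν : ℝ}

lemma mapsTo_tentMap (hμ0 : 0 ≤ μ) (hμ1 : μ ≤ 1) : MapsTo (tentMap μ) (Icc 0 1) (Icc 0 1) := by
  rintro x ⟨hx0, hx1⟩
  unfold tentMap
  split_ifs <;> constructor <;> nlinarith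

lemma tentSign_succ (x : ℝ) (k : ℕ) :
    tentSign μ x (k + 1) = tentSign μ (tentMap μ x) k * if x ≤ 1/2 then 1 else -1 := by
  simp only [tentSign, Finset.prod_range_succ', Function.iterate_succ_apply,
    Function.iterate_zero_apply]
  rfl

lemma tentSign_mul_self (x : ℝ) (k : ℕ) : tentSign μ x k * tentSign μ x k = 1 := by
  rw [tentSign, ← Finset.prod_mul_distrib]
  exact Finset.prod_eq_one fun m _ => by split_ifs <;> norm_num

lemma abs_tentSign (x : ℝ) (k : ℕ) : |tentSign μ x k| = 1 := by
  rw [tentSign, Finset.abs_prod]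
  exact Finset.prod_eq_one fun m _ => by split_ifs <;> simp

lemma tentSign_congr {x y : ℝ} {k : ℕ}
    (h : ∀ m < k, ((tentMap μ)^[m] x ≤ 1/2 ↔ (tentMap ν)^[m] y ≤ 1/2)) :
    tentSign μ x k = tentSign ν y k :=
  Finset.prod_congr rfl fun m hm => by rw [if_congr (h m (Finset.mem_range.1 hm)) rfl rfl]

lemma tentMap_sub_tentMap {x y : ℝ} (h : x ≤ 1/2 ↔ y ≤ 1/2) :
    tentMap μ x - tentMap μ y = (if x ≤ 1/2 then 1 else -1) * (2*μ) * (x - y) := by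
  by_cases hx : x ≤ 1/2
  · simp only [tentMap, hx, h.1 hx, if_true]; ring
  · simp only [tentMap, hx, mt h.2 hx, if_false]; ring

lemma iterate_tentMap_sub {k : ℕ} {x y : ℝ}
    (h : ∀ m < k, ((tentMap μ)^[m] x ≤ 1/2 ↔ (tentMap μ)^[m] y ≤ 1/2)) :
    (tentMap μ)^[k] x - (tentMap μ)^[k] y = tentSign μ x k * (2*μ)^k * (x - y) := by
  induction k generalizing x y with
  | zero => simp [tentSign]
  | succ k ih =>
    have hshift : ∀ m < k, ((tentMap μ)^[m] (tentMap μ x) ≤ 1/2 ↔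
        (tentMap μ)^[m] (tentMap μ y) ≤ 1/2) := fun m hm => by
      simpa only [Function.iterate_succ_apply] using h (m + 1) (by omega)
    have h0 : x ≤ 1/2 ↔ y ≤ 1/2 := h 0 k.succ_pos
    rw [Function.iterate_succ_apply, Function.iterate_succ_apply, ih hshift,
      tentMap_sub_tentMap h0, tentSign_succ, pow_succ]
    ring

lemma abs_iterate_tentMap_sub (hμ : 0 ≤ μ) {k : ℕ} {x y : ℝ}
    (h : ∀ m < k, ((tentMap μ)^[m] x ≤ 1/2 ↔ (tentMap μ)^[m] y ≤ 1/2)) :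
    |(tentMap μ)^[k] x - (tentMap μ)^[k] y| = (2*μ)^k * |x - y| := by
  rw [iterate_tentMap_sub h, abs_mul, abs_mul, abs_tentSign, one_mul,
    abs_of_nonneg (by positivity)]

lemma lt_iff_tentSign_mul_pos (hμ : 0 < μ) {k : ℕ} {x y : ℝ}
    (h : ∀ m < k, ((tentMap μ)^[m] x ≤ 1/2 ↔ (tentMap μ)^[m] y ≤ 1/2)) :
    y < x ↔ 0 < tentSign μ x k * ((tentMap μ)^[k] x - (tentMap μ)^[k] y) := by
  rw [iterate_tentMap_sub h, ← mul_assoc, ← mul_assoc, tentSign_mul_self, one_mul,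
    mul_pos_iff_of_pos_left (by positivity), sub_pos]

lemma exists_itinerary_ne_of_ne (hμ1 : 1/2 < μ) (hμ2 : μ ≤ 1) {x y : ℝ}
    (hx : x ∈ Icc (0:ℝ) 1) (hy : y ∈ Icc (0:ℝ) 1) (hxy : x ≠ y) :
    ∃ k, ¬((tentMap μ)^[k] x ≤ 1/2 ↔ (tentMap μ)^[k] y ≤ 1/2) := by
  by_contra! h
  have hpos : 0 < |x - y| := abs_pos.2 (sub_ne_zero.2 hxy)
  obtain ⟨k, hk⟩ := pow_unbounded_of_one_lt (1 / |x - y|) (by linarith : (1:ℝ) < 2*μ)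
  have hmaps := (mapsTo_tentMap (by linarith) hμ2).iterate k
  obtain ⟨hx0, hx1⟩ := hmaps hx
  obtain ⟨hy0, hy1⟩ := hmaps hy
  have hbound : |(tentMap μ)^[k] x - (tentMap μ)^[k] y| ≤ 1 := abs_le.2 ⟨by linarith, by linarith⟩
  rw [abs_iterate_tentMap_sub (by linarith) fun m _ => h m, ← le_div_iff₀ hpos] at hbound
  linarith

lemma lt_iff_le_half_of_not_iff {a b : ℝ} (h : ¬(a ≤ 1/2 ↔ b ≤ 1/2)) : a < b ↔ a ≤ 1/2 := by
  by_cases ha : a ≤ 1/2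
  · have hb : 1/2 < b := lt_of_not_ge fun hb => h (iff_of_true ha hb)
    exact iff_of_true (by linarith) ha
  · have hb : b ≤ 1/2 := by_contra fun hb => h (iff_of_false ha hb)
    exact iff_of_false (by linarith) ha

lemma lt_iff_lt_of_itinerary_eq (hμ : 0 < μ) (hν : 0 < ν) {u v u' v' : ℝ} {K : ℕ}
    (hu : ∀ m ≤ K, ((tentMap μ)^[m] u ≤ 1/2 ↔ (tentMap ν)^[m] u' ≤ 1/2))
    (hv : ∀ m ≤ K, ((tentMap μ)^[m] v ≤ 1/2 ↔ (tentMap ν)^[m] v' ≤ 1/2))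
    (hsep : ∃ k ≤ K, ¬((tentMap μ)^[k] u ≤ 1/2 ↔ (tentMap μ)^[k] v ≤ 1/2)) :
    u < v ↔ u' < v' := by
  classical
  obtain ⟨hkK, hk⟩ := Nat.find_spec hsep
  set k := Nat.find hsep
  have hagree : ∀ m < k, ((tentMap μ)^[m] v ≤ 1/2 ↔ (tentMap μ)^[m] u ≤ 1/2) := fun m hm =>
    by_contra fun h => Nat.find_min hsep hm ⟨by omega, fun h' => h h'.symm⟩
  have hagree' : ∀ m < k, ((tentMap ν)^[m] v' ≤ 1/2 ↔ (tentMap ν)^[m] u' ≤ 1/2) := fun m hm =>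
    (hv m (by omega)).symm.trans ((hagree m hm).trans (hu m (by omega)))
  have hk' : ¬((tentMap ν)^[k] u' ≤ 1/2 ↔ (tentMap ν)^[k] v' ≤ 1/2) := by
    rwa [← hu k hkK, ← hv k hkK]
  rw [lt_iff_tentSign_mul_pos hμ hagree, lt_iff_tentSign_mul_pos hν hagree',
    tentSign_congr fun m hm => hv m (by omega), mul_pos_iff, mul_pos_iff, sub_pos, sub_pos,
    sub_neg, sub_neg, lt_iff_le_half_of_not_iff hk, lt_iff_le_half_of_not_iff hk',
    lt_iff_le_half_of_not_iff (mt Iff.symm hk), lt_iff_le_half_of_not_iff (mt Iff.symm hk'),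
    hu k hkK, hv k hkK]

end

lemma exists_mem_Ioo_iterate_tentMap_one_le_half_iff (s : ℕ → Prop) (N : ℕ) :
    ∃ y ∈ Ioo (0:ℝ) 1, ∀ m < N, ((tentMap 1)^[m] y ≤ 1/2 ↔ s m) := by
  induction N generalizing s with
  | zero => exact ⟨1/2, by norm_num, fun m hm => absurd hm m.not_lt_zero⟩
  | succ N ih =>
    obtain ⟨y, ⟨hy0, hy1⟩, hy⟩ := ih (fun m => s (m + 1))
    obtain ⟨z, hz, hzy, hzs⟩ : ∃ z ∈ Ioo (0:ℝ) 1, tentMap 1 z = y ∧ (z ≤ 1/2 ↔ s 0) := by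
      by_cases h0 : s 0
      · refine ⟨y/2, ⟨by linarith, by linarith⟩, ?_, iff_of_true (by linarith) h0⟩
        rw [tentMap, if_pos (by linarith)]; ring
      · refine ⟨1 - y/2, ⟨by linarith, by linarith⟩, ?_, iff_of_false (by linarith) h0⟩
        rw [tentMap, if_neg (by linarith)]; ring
    refine ⟨z, hz, fun m hm => ?_⟩
    cases m with
    | zero => exact hzs
    | succ m => rw [Function.iterate_succ_apply, hzy]; exact hy m (by omega)

theorem allow_tentMap_subset (μ : ℝ) (hμ1 : 1/2 < μ) (hμ2 : μ ≤ 1)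
    (n : ℕ) (p : Equiv.Perm (Fin n)) (hp : Allows (tentMap μ) p) :
    Allows (tentMap 1) p := by
  obtain ⟨x, hx, hord⟩ := hp
  have horbit : ∀ i j : Fin n, i ≠ j → (tentMap μ)^[i] x ≠ (tentMap μ)^[j] x := fun i j hij h =>
    (p.injective.ne hij).lt_or_gt.elim (fun h' => ((hord i j).1 h').ne h)
      (fun h' => ((hord j i).1 h').ne' h)
  have hmaps := (mapsTo_tentMap (by linarith) hμ2).iterate
  obtain ⟨K, hK⟩ : ∃ K, ∀ i j : Fin n, i ≠ j → ∃ k ≤ K,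
      ¬((tentMap μ)^[k] ((tentMap μ)^[i] x) ≤ 1/2 ↔ (tentMap μ)^[k] ((tentMap μ)^[j] x) ≤ 1/2) := by
    refine Filter.Eventually.exists (f := Filter.atTop) ?_
    simp only [Filter.eventually_all]
    intro i j hij
    obtain ⟨k, hk⟩ := exists_itinerary_ne_of_ne hμ1 hμ2 (hmaps i hx) (hmaps j hx) (horbit i j hij)
    exact (Filter.eventually_ge_atTop k).mono fun K hKk => ⟨k, hKk, hk⟩
  obtain ⟨y, hy, hyx⟩ :=
    exists_mem_Ioo_iterate_tentMap_one_le_half_iff (fun m => (tentMap μ)^[m] x ≤ 1/2) (n + K)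
  have hshift : ∀ i : Fin n, ∀ m ≤ K,
      ((tentMap μ)^[m] ((tentMap μ)^[i] x) ≤ 1/2 ↔ (tentMap 1)^[m] ((tentMap 1)^[i] y) ≤ 1/2) := by
    intro i m hm
    rw [← Function.iterate_add_apply, ← Function.iterate_add_apply, hyx _ (by omega)]
  refine ⟨y, Ioo_subset_Icc_self hy, fun i j => ?_⟩
  rcases eq_or_ne i j with rfl | hij
  · simp
  rw [hord, lt_iff_lt_of_itinerary_eq (by linarith) one_pos (hshift i) (hshift j) (hK i j hij)]
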